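/- Proposition 1 (kernel ELBO lower-bounds the graph log-likelihood in the data-augmentation model): let N, l be natural numbers and λ a real number with 0 < λ ≤ π. Let Z be a measurable space, p (prior) and q (posterior) probability measures on Z with q ≪ p and KL(q‖p) < ∞. Let Ã : Z → ℝ^{N×N} be a measurable decoder with 0 < Ã(z)_{ij} < 1 for all z, i, j, let φ be a measurable map from real N×N matrices to ℝ^l, and let A ∈ {0,1}^{N×N} be a fixed Boolean adjacency matrix with real 0/1 version B(A). Define: the link reconstruction probability p_link(z) = ∏_{i,j} Ã(z)_{ij}^{A_{ij}} (1−Ã(z)_{ij})^{1−A_{ij}}; the feature likelihood ρ(z) = ρ_{φ(Ã(z)),λ}(φ(B(A))); the normalization constant C(z) = Σ_{A' ∈ {0,1}^{N×N}} (∏_{i,j} Ã(z)_{ij}^{A'_{ij}} (1−Ã(z)_{ij})^{1−A'_{ij}}) · ρ_{φ(Ã(z)),λ}(φ(B(A'))); the joint reconstruction probability p(A|z) = p_link(z)·ρ(z)/C(z); the marginal likelihood P(A) = ∫_Z p(A|z) dp(z); and the kernel ELBO L_KELBO = ∫_Z ( ln p_link(z) − λ·‖φ(B(A)) − φ(Ã(z))‖²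 ) dq(z) − KL(q‖p). Assume z ↦ p(A|z) is integrable with respect to p, and that z ↦ ln p_link(z), z ↦ ‖φ(B(A)) − φ(Ã(z))‖², and z ↦ ln p(A|z) are integrable with respect to q. Then ln P(A) ≥ L_KELBO + (l/2)·ln(2λ) − (l/2)·ln(2π). -/

import Mathlib

/-!
Write `f(z) = p(A|z)` for the joint reconstruction probability. Tilting the prior by `f`
gives a probability measure `p_f ∝ f · p`, and Gibbs' inequality `KL(q‖p_f) ≥ 0` unfolds to
the evidence lower bound `∫ log f dq − KL(q‖p) ≤ log ∫ f dp`. Pointwise, `log f` is the log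
link probability plus the log Gaussian feature density minus `log C(z)`; the Gaussian term is
`(l/2)(log 2λ − log 2π) − λ‖φ(B(A)) − φ(Ã(z))‖²`, and `log C(z) ≤ 0` because `C(z)` averages
Gaussian density values, which are `≤ 1` for `λ ≤ π`, against the link distribution.
-/

open Finset MeasureTheory

/-- Density of the one-dimensional Gaussian with mean `μ` and variance `v`. -/
noncomputable def gaussPDF (μ v x : ℝ) : ℝ :=
  (Real.sqrt (2 * Real.pi * v))⁻¹ * Real.exp (-(x - μ) ^ 2 / (2 * v))

/-- Density of the isotropic Gaussian on `ℝ^l` with mean `μ` and covariance `(1/(2λ))·I`. -/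
noncomputable def isoGaussPDF (l : ℕ) (lam : ℝ) (μ x : Fin l → ℝ) : ℝ :=
  ∏ u : Fin l, gaussPDF (μ u) (1 / (2 * lam)) (x u)

/-- The real `0/1` version of a Boolean adjacency matrix. -/
def boolToReal (N : ℕ) (A : Fin N → Fin N → Bool) : Fin N → Fin N → ℝ :=
  fun i j => if A i j then 1 else 0

/-- Independent-edge (link) reconstruction probability of the Boolean adjacency matrix `A`
given the probabilistic adjacency matrix `M`. -/
noncomputable def plink (N : ℕ) (A : Fin N → Fin N → Bool) (M : Fin N → Fin N → ℝ) : ℝ :=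
  ∏ i : Fin N, ∏ j : Fin N, (if A i j then M i j else 1 - M i j)

/-- Normalization constant of the joint (data-augmentation) reconstruction model. -/
noncomputable def normC (N l : ℕ) (lam : ℝ)
    (φ : (Fin N → Fin N → ℝ) → Fin l → ℝ) (M : Fin N → Fin N → ℝ) : ℝ :=
  ∑ A' : Fin N → Fin N → Bool,
    plink N A' M * isoGaussPDF l lam (φ M) (φ (boolToReal N A'))

section Gaussian

variable {l : ℕ} {lam : ℝ}

lemma gaussPDF_pos {μ v x : ℝ} (hv : 0 < v) : 0 < gaussPDF μ v x := by
  unfold gaussPDF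
  have : 0 < 2 * Real.pi * v := by positivity
  positivity

lemma gaussPDF_le_one {μ v x : ℝ} (hv : 0 < v) (h1 : 1 ≤ 2 * Real.pi * v) :
    gaussPDF μ v x ≤ 1 := by
  unfold gaussPDF
  have hinv : (Real.sqrt (2 * Real.pi * v))⁻¹ ≤ 1 :=
    inv_le_one_of_one_le₀ (Real.one_le_sqrt.mpr h1)
  have hexp : Real.exp (-(x - μ) ^ 2 / (2 * v)) ≤ 1 :=
    Real.exp_le_one_iff.mpr (div_nonpos_of_nonpos_of_nonneg (by nlinarith) (by positivity))
  exact mul_le_one₀ hinv (Real.exp_pos _).le hexp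

lemma log_gaussPDF (hlam : 0 < lam) (μ x : ℝ) :
    Real.log (gaussPDF μ (1 / (2 * lam)) x)
      = (Real.log (2 * lam) - Real.log (2 * Real.pi)) / 2 - lam * (x - μ) ^ 2 := by
  unfold gaussPDF
  have hpi := Real.pi_pos
  have hv : 2 * Real.pi * (1 / (2 * lam)) = Real.pi / lam := by field_simp
  have he : -(x - μ) ^ 2 / (2 * (1 / (2 * lam))) = -(lam * (x - μ) ^ 2) := by field_simp
  rw [hv, he, Real.log_mul (by positivity) (Real.exp_ne_zero _), Real.log_inv,
    Real.log_exp, Real.log_sqrt (by positivity), Real.log_div hpi.ne' hlam.ne',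
    Real.log_mul two_ne_zero hlam.ne', Real.log_mul two_ne_zero hpi.ne']
  ring

lemma isoGaussPDF_pos (hlam : 0 < lam) (μ x : Fin l → ℝ) : 0 < isoGaussPDF l lam μ x :=
  prod_pos fun _ _ => gaussPDF_pos (by positivity)

lemma isoGaussPDF_le_one (hlam : 0 < lam) (hpi : lam ≤ Real.pi) (μ x : Fin l → ℝ) :
    isoGaussPDF l lam μ x ≤ 1 := by
  refine prod_le_one (fun _ _ => (gaussPDF_pos (by positivity)).le) fun _ _ => ?_
  refine gaussPDF_le_one (by positivity) ?_
  rw [show 2 * Real.pi * (1 / (2 * lam)) = Real.pi / lam by field_simp, le_div_iff₀ hlam,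
    one_mul]
  exact hpi

lemma log_isoGaussPDF (hlam : 0 < lam) (μ x : Fin l → ℝ) :
    Real.log (isoGaussPDF l lam μ x)
      = (l : ℝ) / 2 * Real.log (2 * lam) - (l : ℝ) / 2 * Real.log (2 * Real.pi)
        - lam * ∑ u : Fin l, (x u - μ u) ^ 2 := by
  unfold isoGaussPDF
  rw [Real.log_prod fun u _ => (gaussPDF_pos (by positivity)).ne']
  simp only [log_gaussPDF hlam]
  rw [sum_sub_distrib, sum_const, card_univ, Fintype.card_fin, ← mul_sum, nsmul_eq_mul]
  ring

end Gaussian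

section Reconstruction

variable {N l : ℕ} {lam : ℝ} {M : Fin N → Fin N → ℝ}

lemma plink_pos (A : Fin N → Fin N → Bool) (hM : ∀ i j, M i j ∈ Set.Ioo (0 : ℝ) 1) :
    0 < plink N A M :=
  prod_pos fun i _ => prod_pos fun j _ => by
    obtain ⟨h0, h1⟩ := hM i j
    split_ifs <;> linarith

lemma sum_plink (M : Fin N → Fin N → ℝ) : ∑ A : Fin N → Fin N → Bool, plink N A M = 1 := by
  unfold plink
  rw [← Fintype.prod_sum fun i (r : Fin N → Bool) => ∏ j, if r j then M i j else 1 - M i j]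
  refine prod_eq_one fun i _ => ?_
  rw [← Fintype.prod_sum fun j (b : Bool) => if b then M i j else 1 - M i j]
  exact prod_eq_one fun j _ => by simp

lemma normC_pos (hlam : 0 < lam) (φ : (Fin N → Fin N → ℝ) → Fin l → ℝ)
    (hM : ∀ i j, M i j ∈ Set.Ioo (0 : ℝ) 1) : 0 < normC N l lam φ M :=
  sum_pos (fun A _ => mul_pos (plink_pos A hM) (isoGaussPDF_pos hlam _ _)) univ_nonempty

lemma normC_le_one (hlam : 0 < lam) (hpi : lam ≤ Real.pi)
    (φ : (Fin N → Fin N → ℝ) → Fin l → ℝ) (hM : ∀ i j, M i j ∈ Set.Ioo (0 : ℝ) 1) :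
    normC N l lam φ M ≤ 1 :=
  calc normC N l lam φ M
      ≤ ∑ A : Fin N → Fin N → Bool, plink N A M :=
        sum_le_sum fun A _ => mul_le_of_le_one_right (plink_pos A hM).le
          (isoGaussPDF_le_one hlam hpi _ _)
    _ = 1 := sum_plink M

lemma log_plink_sub_sqDist_add_le_log_joint (hlam : 0 < lam) (hpi : lam ≤ Real.pi)
    (φ : (Fin N → Fin N → ℝ) → Fin l → ℝ) (A : Fin N → Fin N → Bool)
    (hM : ∀ i j, M i j ∈ Set.Ioo (0 : ℝ) 1) :
    Real.log (plink N A M) - lam * ∑ u : Fin l, (φ (boolToReal N A) u - φ M u) ^ 2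
        + ((l : ℝ) / 2 * Real.log (2 * lam) - (l : ℝ) / 2 * Real.log (2 * Real.pi))
      ≤ Real.log (plink N A M * isoGaussPDF l lam (φ M) (φ (boolToReal N A))
          / normC N l lam φ M) := by
  have hC := normC_pos hlam φ hM
  rw [Real.log_div (mul_pos (plink_pos A hM) (isoGaussPDF_pos hlam _ _)).ne' hC.ne',
    Real.log_mul (plink_pos A hM).ne' (isoGaussPDF_pos hlam _ _).ne', log_isoGaussPDF hlam]
  linarith [Real.log_nonpos hC.le (normC_le_one hlam hpi φ hM)]

end Reconstruction

namespace MeasureTheory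

variable {Z : Type*} [MeasurableSpace Z] {p q : Measure Z} {h : Z → ℝ}

/-- The Donsker–Varadhan (evidence lower bound) inequality. -/
lemma integral_sub_integral_llr_le_log_integral_exp [IsProbabilityMeasure q] [SigmaFinite p]
    (hqp : q ≪ p) (hh : Integrable h q) (hexp : Integrable (fun z => Real.exp (h z)) p)
    (hllr : Integrable (llr q p) q) :
    ∫ z, h z ∂q - ∫ z, llr q p z ∂q ≤ Real.log (∫ z, Real.exp (h z) ∂p) := by
  have : NeZero p := ⟨fun hp => IsProbabilityMeasure.ne_zero q
    (Measure.absolutelyContinuous_zero_iff.mp (hp ▸ hqp))⟩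
  have : IsProbabilityMeasure (p.tilted h) := isProbabilityMeasure_tilted hexp
  have hgibbs := InformationTheory.integral_llr_add_sub_measure_univ_nonneg
    (hqp.trans (absolutelyContinuous_tilted hexp))
    (integrable_llr_tilted_right hqp hh hllr hexp)
  rw [integral_llr_tilted_right hqp hh hexp hllr] at hgibbs
  simp only [probReal_univ] at hgibbs
  linarith

end MeasureTheory

theorem kernel_elbo_lower_bounds_log_likelihood_general {Z : Type*} [MeasurableSpace Z]
    (N l : ℕ) (lam : ℝ) (hlam : 0 < lam) (hlampi : lam ≤ Real.pi)
    (p q : Measure Z) [IsProbabilityMeasure p] [IsProbabilityMeasure q]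
    (hac : q ≪ p)
    (hKL : Integrable (fun z => Real.log ((q.rnDeriv p z).toReal)) q)
    (Atil : Z → Fin N → Fin N → ℝ)
    (hAtil01 : ∀ z i j, Atil z i j ∈ Set.Ioo (0 : ℝ) 1)
    (φ : (Fin N → Fin N → ℝ) → Fin l → ℝ)
    (A : Fin N → Fin N → Bool)
    (hint_p : Integrable (fun z =>
        plink N A (Atil z) * isoGaussPDF l lam (φ (Atil z)) (φ (boolToReal N A))
          / normC N l lam φ (Atil z)) p)
    (hint_loglink : Integrable (fun z => Real.log (plink N A (Atil z))) q)
    (hint_dist : Integrable (fun z =>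
        ∑ u : Fin l, (φ (boolToReal N A) u - φ (Atil z) u) ^ 2) q)
    (hint_logjoint : Integrable (fun z => Real.log
        (plink N A (Atil z) * isoGaussPDF l lam (φ (Atil z)) (φ (boolToReal N A))
          / normC N l lam φ (Atil z))) q) :
    Real.log (∫ z,
        plink N A (Atil z) * isoGaussPDF l lam (φ (Atil z)) (φ (boolToReal N A))
          / normC N l lam φ (Atil z) ∂p)
      ≥ ((∫ z, (Real.log (plink N A (Atil z))
              - lam * ∑ u : Fin l, (φ (boolToReal N A) u - φ (Atil z) u) ^ 2) ∂q)
            - ∫ z, Real.log ((q.rnDeriv p z).toReal) ∂q)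
          + (l : ℝ) / 2 * Real.log (2 * lam) - (l : ℝ) / 2 * Real.log (2 * Real.pi) := by
  set f : Z → ℝ := fun z =>
    plink N A (Atil z) * isoGaussPDF l lam (φ (Atil z)) (φ (boolToReal N A))
      / normC N l lam φ (Atil z)
  have hf_pos z : 0 < f z :=
    div_pos (mul_pos (plink_pos A (hAtil01 z)) (isoGaussPDF_pos hlam _ _))
      (normC_pos hlam φ (hAtil01 z))
  have hexp_log z : Real.exp (Real.log (f z)) = f z := Real.exp_log (hf_pos z)
  have helbo := integral_sub_integral_llr_le_log_integral_exp (h := fun z => Real.log (f z))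
    hac hint_logjoint (by simpa only [hexp_log] using hint_p) hKL
  simp only [hexp_log, llr_def] at helbo
  have hkernel_int := hint_loglink.sub (hint_dist.const_mul lam)
  have hkernel := integral_mono (hkernel_int.add (integrable_const _)) hint_logjoint
    fun z => log_plink_sub_sqDist_add_le_log_joint hlam hlampi φ A (hAtil01 z)
  rw [integral_add' hkernel_int (integrable_const _), integral_const, probReal_univ,
    one_smul] at hkernel
  simp only [Pi.sub_apply] at hkernel
  linarith

/-- Proposition 1: in the data-augmentation model, the kernel ELBO (plus a constant
independent of the model) lower-bounds the graph log-likelihood: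
`ln P(A) ≥ L_KELBO + (l/2)·ln(2λ) − (l/2)·ln(2π)`. -/
theorem kernel_elbo_lower_bounds_log_likelihood {Z : Type*} [MeasurableSpace Z]
    (N l : ℕ) (lam : ℝ) (hlam : 0 < lam) (hlampi : lam ≤ Real.pi)
    (p q : Measure Z) [IsProbabilityMeasure p] [IsProbabilityMeasure q]
    (hac : q ≪ p)
    (hKL : Integrable (fun z => Real.log ((q.rnDeriv p z).toReal)) q)
    (Atil : Z → Fin N → Fin N → ℝ) (hAtil : Measurable Atil)
    (hAtil01 : ∀ z i j, Atil z i j ∈ Set.Ioo (0 : ℝ) 1)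
    (φ : (Fin N → Fin N → ℝ) → Fin l → ℝ) (hφ : Measurable φ)
    (A : Fin N → Fin N → Bool)
    (hint_p : Integrable (fun z =>
        plink N A (Atil z) * isoGaussPDF l lam (φ (Atil z)) (φ (boolToReal N A))
          / normC N l lam φ (Atil z)) p)
    (hint_loglink : Integrable (fun z => Real.log (plink N A (Atil z))) q)
    (hint_dist : Integrable (fun z =>
        ∑ u : Fin l, (φ (boolToReal N A) u - φ (Atil z) u) ^ 2) q)
    (hint_logjoint : Integrable (fun z => Real.log
        (plink N A (Atil z) * isoGaussPDF l lam (φ (Atil z)) (φ (boolToReal N A))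
          / normC N l lam φ (Atil z))) q) :
    Real.log (∫ z,
        plink N A (Atil z) * isoGaussPDF l lam (φ (Atil z)) (φ (boolToReal N A))
          / normC N l lam φ (Atil z) ∂p)
      ≥ ((∫ z, (Real.log (plink N A (Atil z))
              - lam * ∑ u : Fin l, (φ (boolToReal N A) u - φ (Atil z) u) ^ 2) ∂q)
            - ∫ z, Real.log ((q.rnDeriv p z).toReal) ∂q)
          + (l : ℝ) / 2 * Real.log (2 * lam) - (l : ℝ) / 2 * Real.log (2 * Real.pi) :=
  kernel_elbo_lower_bounds_log_likelihood_general N l lam hlam hlampi p q hac hKL Atil hAtil01 φ A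
    hint_p hint_loglink hint_dist hint_logjoint
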